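/- Let n pairs of reals (aᵢ, bᵢ) be given. Let S_x ⊆ {1,…,n} be a maximum-size subset that is consistent in the first coordinate (for i, j ∈ S_x: aᵢ ≤ aⱼ iff bᵢ ≤ bⱼ cannot be violated in the a-order sense), and let S_xy ⊆ S_x be a maximum-size subset of S_x consistent in the second coordinate. Then S_xy is consistent in both coordinates, and |S_xy| ≥ |T| is NOT guaranteed for the maximum jointly-consistent set T; i.e., there exists an instance where |S_xy| < |T| for every choice of maximum S_x. -/

import Mathlib

/-!
Consistency passes to subsets, so the two-stage output is consistent in both coordinates.
It can be suboptimal: with `a = (0, 1, 2, -5, -4)` and `b = (2, 1, 0, 5, 6)` the unique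
maximum `a`-consistent set is `{0, 1, 2}`, on which `b` is strictly decreasing, so the
second stage keeps a single index, whereas `{3, 4}` is consistent in both coordinates.
-/

/-- A set of indices is consistent in coordinate `a` if the index order (the order in the
first image) agrees with the order of `a` (the coordinate in the second image). -/
def ConsIn {n : ℕ} (a : Fin n → ℝ) (S : Finset (Fin n)) : Prop :=
  ∀ i ∈ S, ∀ j ∈ S, i ≤ j → a i ≤ a j

namespace ConsIn

variable {n : ℕ} {a : Fin n → ℝ} {S T : Finset (Fin n)}

theorem mono (hT : ConsIn a T) (hST : S ⊆ T) : ConsIn a S :=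
  fun i hi j hj hij => hT i (hST hi) j (hST hj) hij

theorem card_le_one_of_strictAntiOn (hS : ConsIn a S) (ha : StrictAntiOn a (S : Set (Fin n))) :
    S.card ≤ 1 := by
  refine Finset.card_le_one.mpr fun i hi j hj => ?_
  by_contra hij
  rcases lt_or_gt_of_ne hij with h | h
  · exact (ha hi hj h).not_ge (hS i hi j hj h.le)
  · exact (ha hj hi h).not_ge (hS j hj i hi h.le)

theorem subset_or_subset {s t : Finset (Fin n)}
    (hst : ∀ i ∈ s, ∀ j ∈ t, i ≤ j ∧ a j < a i) (hS : ConsIn a S) (hSst : S ⊆ s ∪ t) :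
    S ⊆ s ∨ S ⊆ t := by
  by_contra! h
  obtain ⟨j, hjS, hjs⟩ := Finset.not_subset.mp h.1
  obtain ⟨i, hiS, hit⟩ := Finset.not_subset.mp h.2
  have hjt : j ∈ t := (Finset.mem_union.mp (hSst hjS)).resolve_left hjs
  have his : i ∈ s := (Finset.mem_union.mp (hSst hiS)).resolve_right hit
  obtain ⟨hij, hlt⟩ := hst i his j hjt
  exact hlt.not_ge (hS i hiS j hjS hij)

end ConsIn

namespace TwoStageCounterexample

abbrev a : Fin 5 → ℝ := ![0, 1, 2, -5, -4]

abbrev b : Fin 5 → ℝ := ![2, 1, 0, 5, 6]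

abbrev low : Finset (Fin 5) := {0, 1, 2}

abbrev high : Finset (Fin 5) := {3, 4}

theorem consIn_a_low : ConsIn a low := by
  intro i hi j hj hij
  fin_cases hi <;> fin_cases hj <;>
    simp only [Fin.isValue, Fin.reduceLE, a, Matrix.cons_val] at hij ⊢ <;> norm_num

theorem consIn_a_high : ConsIn a high := by
  intro i hi j hj hij
  fin_cases hi <;> fin_cases hj <;>
    simp only [Fin.isValue, Fin.reduceLE, a, Matrix.cons_val] at hij ⊢ <;> norm_num

theorem consIn_b_high : ConsIn b high := by
  intro i hi j hj hij
  fin_cases hi <;> fin_cases hj <;>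
    simp only [Fin.isValue, Fin.reduceLE, b, Matrix.cons_val] at hij ⊢ <;> norm_num

theorem low_dominates_high : ∀ i ∈ low, ∀ j ∈ high, i ≤ j ∧ a j < a i := by
  intro i hi j hj
  fin_cases hi <;> fin_cases hj <;>
    simp only [Fin.isValue, Fin.reduceLE, a, Matrix.cons_val] <;> norm_num

theorem strictAntiOn_b_low : StrictAntiOn b (low : Set (Fin 5)) := by
  intro i hi j hj hij
  fin_cases i <;> fin_cases j <;> simp_all [b]

theorem subset_low_of_maximal {Sx : Finset (Fin 5)} (hSx : ConsIn a Sx)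
    (hmax : ∀ S' : Finset (Fin 5), ConsIn a S' → S'.card ≤ Sx.card) : Sx ⊆ low := by
  have hcard : high.card < Sx.card := (hmax low consIn_a_low).trans_lt' (by decide)
  refine (hSx.subset_or_subset low_dominates_high
    ((Finset.subset_univ Sx).trans (by decide))).resolve_right fun h => ?_
  exact (Finset.card_le_card h).not_gt hcard

end TwoStageCounterexample

/-- The two-stage method (maximum `x`-consistent set, then maximum `y`-consistent subset
of it) always outputs a set consistent in both coordinates, but there is an instance on
which its output is strictly smaller than the maximum jointly-consistent set, for every
choice of maximum first-stage set. -/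
theorem stmt16 :
    (∀ (n : ℕ) (a b : Fin n → ℝ) (Sx Sxy : Finset (Fin n)),
      ConsIn a Sx → Sxy ⊆ Sx → ConsIn b Sxy → ConsIn a Sxy ∧ ConsIn b Sxy) ∧
    (∃ (n : ℕ) (a b : Fin n → ℝ),
      ∀ Sx : Finset (Fin n),
        (ConsIn a Sx ∧ ∀ S' : Finset (Fin n), ConsIn a S' → S'.card ≤ Sx.card) →
      ∀ Sxy : Finset (Fin n),
        (Sxy ⊆ Sx ∧ ConsIn b Sxy ∧
          ∀ S'' : Finset (Fin n), S'' ⊆ Sx → ConsIn b S'' → S''.card ≤ Sxy.card) →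
      ∃ T : Finset (Fin n), ConsIn a T ∧ ConsIn b T ∧ Sxy.card < T.card) := by
  open TwoStageCounterexample in
  refine ⟨fun _ _ _ _ _ hSx hsub hb => ⟨hSx.mono hsub, hb⟩, 5, a, b, ?_⟩
  rintro Sx ⟨hSx, hmax⟩ Sxy ⟨hsub, hSxy, -⟩
  have hlow : Sxy ⊆ low := hsub.trans (subset_low_of_maximal hSx hmax)
  have hone : Sxy.card ≤ 1 :=
    hSxy.card_le_one_of_strictAntiOn (strictAntiOn_b_low.mono (Finset.coe_subset.mpr hlow))
  exact ⟨high, consIn_a_high, consIn_b_high, hone.trans_lt (by decide)⟩
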